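/- Set λ = √6 and let γ be any real number. Define the shifted map components X̄(X,Y) = W₁(1 + X, Y) − 1 and Ȳ(X,Y) = W₂(1 + X, Y), which fix the origin (corresponding to the fixed point B = (1,0)). Define ψ(Y) = −Y²/2. Then: (i) the center-manifold invariance residual R(Y) = ψ(Ȳ(ψ(Y), Y)) − X̄(ψ(Y), Y) satisfies R(Y) = O(Y⁴) as Y → 0; (ii) the reduced map satisfies Ȳ(ψ(Y), Y) = Y − (3/2)·Y³ + O(Y⁵) as Y → 0. -/

import Mathlib

/-! For λ = √6 the coupling √(3/2)·λ equals 3, so the shifted map is polynomial and both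
residuals are explicit polynomials in Y: the invariance residual is Y⁴ times a polynomial,
and the reduced map differs from Y − (3/2)Y³ by exactly (3/4 − 3γ/8)·Y⁵. -/

open Asymptotics Filter

noncomputable def f (γ lam x y : ℝ) : ℝ :=
  (3/2) * x * (2*x^2 + γ*(1 - x^2 - y^2)) - 3*x + Real.sqrt (3/2) * lam * y^2

noncomputable def g (γ lam x y : ℝ) : ℝ :=
  (3/2) * y * (2*x^2 + γ*(1 - x^2 - y^2)) - Real.sqrt (3/2) * lam * x * y

/-- The unit-step Euler discretization map W(x,y) = (x + f(x,y), y + g(x,y)). -/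
noncomputable def W (γ lam : ℝ) (p : ℝ × ℝ) : ℝ × ℝ :=
  (p.1 + f γ lam p.1 p.2, p.2 + g γ lam p.1 p.2)

/-- The map W with λ = √6, shifted so that the fixed point B = (1,0) is at the
origin: first component. -/
noncomputable def Xbar (γ X Y : ℝ) : ℝ := (W γ (Real.sqrt 6) (1 + X, Y)).1 - 1

/-- The shifted map: second component. -/
noncomputable def Ybar (γ X Y : ℝ) : ℝ := (W γ (Real.sqrt 6) (1 + X, Y)).2

/-- The approximate center manifold X = ψ(Y) = −Y²/2 at B for λ = √6. -/
noncomputable def ψ (Y : ℝ) : ℝ := -Y^2/2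

theorem Asymptotics.isBigO_mul_of_continuousAt {α 𝕜 : Type*} [TopologicalSpace α]
    [NormedField 𝕜] {u c : α → 𝕜} {a : α} (hc : ContinuousAt c a) :
    (fun x => u x * c x) =O[nhds a] u := by
  simpa using (isBigO_refl u _).mul (hc.tendsto.isBigO_one 𝕜)

theorem sqrt_three_halves_mul_sqrt_six : Real.sqrt (3/2) * Real.sqrt 6 = 3 := by
  rw [← Real.sqrt_mul (by norm_num), show (3/2 : ℝ) * 6 = 3^2 by norm_num,
    Real.sqrt_sq (by norm_num)]

theorem Xbar_eq (γ X Y : ℝ) :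
    Xbar γ X Y = X + (3/2) * (1 + X) * (2*(1 + X)^2 + γ*(1 - (1 + X)^2 - Y^2))
      - 3*(1 + X) + 3 * Y^2 := by
  simp only [Xbar, W, f, sqrt_three_halves_mul_sqrt_six]
  ring

theorem Ybar_eq (γ X Y : ℝ) :
    Ybar γ X Y = Y + (3/2) * Y * (2*(1 + X)^2 + γ*(1 - (1 + X)^2 - Y^2))
      - 3 * (1 + X) * Y := by
  simp only [Ybar, W, g, sqrt_three_halves_mul_sqrt_six]
  ring

theorem invariance_residual_eq (γ Y : ℝ) :
    ψ (Ybar γ (ψ Y) Y) - Xbar γ (ψ Y) Y =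
      Y^4 * (3*γ/8 - 3/4 + (3*γ/16 - 3/2)*Y^2 + (9/8 - 9*γ/16)*Y^4
        + (9*γ/32 - 9/32 - 9*γ^2/128)*Y^6) := by
  simp only [ψ, Xbar_eq, Ybar_eq]
  ring

theorem reduced_map_eq (γ Y : ℝ) :
    Ybar γ (ψ Y) Y = Y - (3/2)*Y^3 + (3/4 - 3*γ/8) * Y^5 := by
  simp only [ψ, Ybar_eq]
  ring

/-- For λ = √6: (i) the center-manifold invariance residual is O(Y⁴);
(ii) the reduced map is Y − (3/2)Y³ + O(Y⁵). -/
theorem stmt_14 (γ : ℝ) :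
    (fun Y : ℝ => ψ (Ybar γ (ψ Y) Y) - Xbar γ (ψ Y) Y) =O[nhds (0:ℝ)]
      (fun Y : ℝ => Y^4) ∧
    (fun Y : ℝ => Ybar γ (ψ Y) Y - (Y - (3/2)*Y^3)) =O[nhds (0:ℝ)]
      (fun Y : ℝ => Y^5) := by
  constructor
  · simp only [invariance_residual_eq]
    exact isBigO_mul_of_continuousAt (by fun_prop)
  · simp only [reduced_map_eq, add_sub_cancel_left]
    exact isBigO_const_mul_self _ _ _
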